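/- arXiv:2503.20620 — 6 statements merged into one kernel-verified Lean document; each statement's English description precedes it below -/
import Mathlib

section
/- Let V be a type, T : SimpleGraph V a tree, and let a group G act on V so that each g ∈ G is an automorphism of T. Let g, h ∈ G be elements each fixing some vertex of T, and define the stable fixed-point sets Fix^∞(g) = {v ∈ V : ∃ n ≠ 0, gⁿ·v = v} and Fix^∞(h) = {v ∈ V : ∃ n ≠ 0, hⁿ·v = v}. If Fix^∞(g) ∩ Fix^∞(h) = ∅, then the subgroup generated by g and h is the free product of ⟨g⟩ and ⟨h⟩: the canonical homomorphism from the free product of the subgroups Subgroup.zpowers g and Subgroup.zpowers h to G, induced by the inclusions, is injective. -/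
/-- `x` and `y` freely generate a free subgroup of rank 2. -/
def FreelyGenerateF2 {G : Type*} [Group G] (x y : G) : Prop :=
  Function.Injective (FreeGroup.lift (fun i : Fin 2 => if i = 0 then x else y) :
    FreeGroup (Fin 2) →* G)

/-- `G` satisfies the power alternative. -/
def PowerAlternative (G : Type*) [Group G] : Prop :=
  ∀ g h : G, ∃ n : ℕ, 1 ≤ n ∧ (Commute (g ^ n) (h ^ n) ∨ FreelyGenerateF2 (g ^ n) (h ^ n))

/-- `G` satisfies the power alternative with uniform exponent `n`. -/
def UniformPowerAlternative (G : Type*) [Group G] (n : ℕ) : Prop :=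
  ∀ g h : G, Commute (g ^ n) (h ^ n) ∨ FreelyGenerateF2 (g ^ n) (h ^ n)

/-- The action of `G` on `V` is by automorphisms of the graph `T`. -/
def ActsByGraphAutomorphisms (G : Type*) {V : Type*} [Group G] [MulAction G V]
    (T : SimpleGraph V) : Prop :=
  ∀ (g : G) (u v : V), T.Adj (g • u) (g • v) ↔ T.Adj u v

/-- The action of `G` on the graph `T` is acylindrical in Sela's sense: pointwise
stabilisers of pairs of vertices at distance more than `K` have at most `c` elements. -/
def SelaAcylindrical (G : Type*) {V : Type*} [Group G] [MulAction G V]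
    (T : SimpleGraph V) : Prop :=
  ∃ K c : ℕ, ∀ u v : V, K < T.dist u v →
    {g : G | g • u = u ∧ g • v = v}.Finite ∧ {g : G | g • u = u ∧ g • v = v}.ncard ≤ c

/-!
`A = Fix^∞(g)` and `B = Fix^∞(h)` are disjoint subtrees (two vertices of `A` are fixed by a common
nontrivial power of `g`, hence so is the geodesic between them), so there is a bridge `p ∈ A`,
`q ∈ B`, `p ≠ q`, through which every geodesic from `A` to `B` runs. A nontrivial power `a` of `g`
fixes some vertex, and only vertices of `A`. If `q` lies between `v` and `p`, the geodesic from `v`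
to `a • v` passes through the projection of `v` onto `Fix(a)`, hence through `q` and `p`; so `p`
lies between `a • v` and `q`, and `a • v ≠ p`. With the symmetric statement for powers of `h` this
is a ping-pong on the two half-trees cut out by the bridge, and since the endpoints `p`, `q` are
never hit, no nontrivial reduced word acts trivially, even when `g` and `h` are involutions.
-/

open scoped Pointwise Function

namespace Monoid.CoprodI

variable {ι G α : Type*} [Group G] [MulAction G α] {H : ι → Type*} [∀ i, Group (H i)]
  (f : ∀ i, H i →* G) {Y : ι → Set α} {x : ι → α}

theorem lift_word_smul_subset_diff_of_ping_pong
    (hpp : Pairwise fun i j => ∀ h : H i, h ≠ 1 → f i h • Y j ⊆ Y i \ {x i})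
    {i j m : ι} (w : NeWord H i j) (hm : j ≠ m) : lift f w.prod • Y m ⊆ Y i \ {x i} := by
  induction w generalizing m with
  | singleton h hne_one => simpa using hpp hm h hne_one
  | @append i j k l w₁ hne w₂ ih₁ ih₂ =>
    calc lift f (NeWord.append w₁ hne w₂).prod • Y _
        = lift f w₁.prod • lift f w₂.prod • Y _ := by simp [mul_smul]
      _ ⊆ lift f w₁.prod • Y k := Set.smul_set_mono ((ih₂ hm).trans Set.sdiff_subset)
      _ ⊆ Y i \ {x i} := ih₁ hne

/-- Unlike `lift_injective_of_ping_pong`, no factor needs three elements (so `ℤ/2 ∗ ℤ/2` is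
covered): the base points `x i`, avoided by the nontrivial elements of `H i`, take over that role. -/
theorem lift_injective_of_ping_pong_of_mem [Nontrivial ι] (hYdisj : Pairwise (Disjoint on Y))
    (hx : ∀ i, x i ∈ Y i)
    (hpp : Pairwise fun i j => ∀ h : H i, h ≠ 1 → f i h • Y j ⊆ Y i \ {x i}) :
    Function.Injective (lift f) := by
  classical
  refine (injective_iff_map_eq_one (lift f)).mpr ?_
  rw [Word.equiv.forall_congr_left]
  intro w hw
  rcases eq_or_ne w Word.empty with rfl | hne
  · rfl
  obtain ⟨i, j, w, rfl⟩ := NeWord.of_word w hne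
  exfalso
  obtain ⟨k, hk⟩ := exists_ne j
  have hmem := lift_word_smul_subset_diff_of_ping_pong f hpp w hk.symm
    (Set.smul_mem_smul_set (hx k))
  rw [show lift f w.prod = 1 from hw, one_smul] at hmem
  rcases eq_or_ne k i with rfl | hki
  · exact hmem.2 rfl
  · exact (hYdisj hki).le_bot ⟨hx k, hmem.1⟩

end Monoid.CoprodI

namespace SimpleGraph

variable {V W : Type*} {G : SimpleGraph V} {u v w x y z c c' p q r : V}

def Between (G : SimpleGraph V) (u c v : V) : Prop :=
  G.dist u c + G.dist c v = G.dist u v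

lemma Between.symm (h : G.Between u c v) : G.Between v c u := by
  grind [Between, dist_comm]

lemma between_self_left (G : SimpleGraph V) (u v : V) : G.Between u u v := by
  simp [Between]

lemma Hom.dist_le {G' : SimpleGraph W} (f : G →g G') (h : G.Reachable u v) :
    G'.dist (f u) (f v) ≤ G.dist u v := by
  obtain ⟨p, hp⟩ := h.exists_walk_length_eq_dist
  simpa [hp] using SimpleGraph.dist_le (p.map f)

lemma Iso.dist_eq {G' : SimpleGraph W} (φ : G ≃g G') (u v : V) :
    G'.dist (φ u) (φ v) = G.dist u v := by
  by_cases h : G.Reachable u v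
  · refine le_antisymm (Hom.dist_le φ.toHom h) ?_
    simpa using Hom.dist_le φ.symm.toHom (Iso.reachable_iff (φ := φ) |>.mpr h)
  · rw [dist_eq_zero_of_not_reachable h,
      dist_eq_zero_of_not_reachable (Iso.reachable_iff (φ := φ) |>.not.mpr h)]

lemma Iso.between_iff {G' : SimpleGraph W} (φ : G ≃g G') :
    G'.Between (φ u) (φ c) (φ v) ↔ G.Between u c v := by
  simp only [Between, Iso.dist_eq]

lemma Connected.eq_of_between_of_between (hG : G.Connected) (h₁ : G.Between u x y)
    (h₂ : G.Between u y x) : x = y := by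
  unfold Between at h₁ h₂
  rw [← hG.dist_eq_zero_iff]
  grind [dist_comm]

lemma Between.trans_left (hG : G.Connected) (h₁ : G.Between w y z) (h₂ : G.Between w x y) :
    G.Between w x z := by
  have := hG.dist_triangle (u := w) (v := x) (w := z)
  have := hG.dist_triangle (u := x) (v := y) (w := z)
  unfold Between at *
  omega

lemma Between.trans_left_right (hG : G.Connected) (h₁ : G.Between w y z)
    (h₂ : G.Between w x y) : G.Between x y z := by
  have := hG.dist_triangle (u := w) (v := x) (w := z)
  have := hG.dist_triangle (u := x) (v := y) (w := z)
  unfold Between at *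
  omega

lemma Walk.between_getVert (p : G.Walk u v) (hp : p.length = G.dist u v) {n : ℕ}
    (hn : n ≤ p.length) : G.Between u (p.getVert n) v ∧ G.dist u (p.getVert n) = n := by
  have h₁ := SimpleGraph.dist_le (p.take n)
  have h₂ := SimpleGraph.dist_le (p.drop n)
  have h₃ := (p.drop n).reachable.dist_triangle_right u
  rw [Walk.take_length] at h₁
  rw [Walk.drop_length] at h₂
  unfold Between
  omega

lemma Between.exists_walk (hG : G.Connected) (h : G.Between u c v) :
    ∃ p : G.Walk u v, p.length = G.dist u v ∧ p.getVert (G.dist u c) = c := by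
  obtain ⟨p, hp⟩ := hG.exists_walk_length_eq_dist u c
  obtain ⟨q, hq⟩ := hG.exists_walk_length_eq_dist c v
  refine ⟨p.append q, by rw [Walk.length_append, hp, hq, h], ?_⟩
  rw [Walk.getVert_append, ← hp]
  simp

lemma Walk.exists_eq_append_first_mem (p : G.Walk u v) {S : Set V} (hv : v ∈ S) :
    ∃ c ∈ S, ∃ (p₁ : G.Walk u c) (p₂ : G.Walk c v),
      p = p₁.append p₂ ∧ ∀ x ∈ p₁.support, x ∈ S → x = c := by
  induction p with
  | nil => exact ⟨_, hv, .nil, .nil, rfl, by simp⟩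
  | @cons a b _ hab p ih =>
    by_cases ha : a ∈ S
    · exact ⟨a, ha, .nil, .cons hab p, rfl, by simp⟩
    · obtain ⟨c, hc, p₁, p₂, rfl, hfirst⟩ := ih hv
      refine ⟨c, hc, .cons hab p₁, p₂, rfl, ?_⟩
      intro x hx hxS
      rcases List.mem_cons.mp hx with rfl | hx
      · exact absurd hxS ha
      · exact hfirst x hx hxS

lemma Walk.IsPath.append_of_forall_mem {p : G.Walk u c} {q : G.Walk c v} (hp : p.IsPath)
    (hq : q.IsPath) (h : ∀ x ∈ p.support, x ∈ q.support → x = c) : (p.append q).IsPath := by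
  rw [Walk.isPath_def, Walk.support_append, List.nodup_append]
  refine ⟨hp.support_nodup, hq.support_nodup.sublist (List.tail_sublist _), ?_⟩
  rintro x hx _ hx' rfl
  have hxc := h x hx (List.mem_of_mem_tail hx')
  subst hxc
  have hnodup := hq.support_nodup
  rw [← q.cons_tail_support] at hnodup
  exact (List.nodup_cons.mp hnodup).1 hx'

def IsConvex (G : SimpleGraph V) (C : Set V) : Prop :=
  ∀ ⦃u c v⦄, u ∈ C → v ∈ C → G.Between u c v → c ∈ C

namespace IsTree

variable (hG : G.IsTree)
include hG

lemma length_eq_dist_of_isPath {p : G.Walk u v} (hp : p.IsPath) : p.length = G.dist u v := by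
  obtain ⟨q, hq, hqlen⟩ := hG.connected.exists_path_of_dist u v
  obtain rfl : p = q :=
    congrArg Subtype.val ((hG.isAcyclic.subsingleton_path u v).elim ⟨p, hp⟩ ⟨q, hq⟩)
  exact hqlen

lemma between_of_isPath_append {p : G.Walk u c} {q : G.Walk c v} (h : (p.append q).IsPath) :
    G.Between u c v := by
  rw [Between, ← hG.length_eq_dist_of_isPath h.of_append_left,
    ← hG.length_eq_dist_of_isPath h.of_append_right, ← Walk.length_append,
    hG.length_eq_dist_of_isPath h]

lemma exists_median (u v w : V) :
    ∃ m, G.Between u m v ∧ G.Between v m w ∧ G.Between u m w := by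
  classical
  obtain ⟨P, hP, -⟩ := hG.connected.exists_path_of_dist u v
  obtain ⟨R, hR, -⟩ := hG.connected.exists_path_of_dist v w
  obtain ⟨m, hmR, P₁, P₂, rfl, hfirst⟩ :=
    P.exists_eq_append_first_mem (S := {x | x ∈ R.support}) R.start_mem_support
  refine ⟨m, hG.between_of_isPath_append hP, ?_,
    hG.between_of_isPath_append (p := P₁) (q := R.dropUntil m hmR) ?_⟩
  · rw [← R.take_spec hmR] at hR
    exact hG.between_of_isPath_append hR
  · exact hP.of_append_left.append_of_forall_mem (hR.dropUntil hmR)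
      fun x hx hxD ↦ hfirst x hx (R.support_dropUntil_subset_support hmR hxD)

lemma eq_of_between_of_dist_eq (h : G.Between u c v) (h' : G.Between u c' v)
    (hd : G.dist u c = G.dist u c') : c = c' := by
  obtain ⟨p, hp, hpc⟩ := h.exists_walk hG.connected
  obtain ⟨p', hp', hpc'⟩ := h'.exists_walk hG.connected
  obtain rfl : p = p' := congrArg Subtype.val <| (hG.isAcyclic.subsingleton_path u v).elim
    ⟨p, p.isPath_of_length_eq_dist hp⟩ ⟨p', p'.isPath_of_length_eq_dist hp'⟩
  rw [← hpc, ← hpc', hd]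

lemma between_of_dist_le (h₁ : G.Between u c v) (h₂ : G.Between u x v)
    (hle : G.dist u c ≤ G.dist u x) : G.Between u c x := by
  obtain ⟨p, hp⟩ := hG.connected.exists_walk_length_eq_dist u x
  obtain ⟨hc, hdc⟩ := p.between_getVert hp (n := G.dist u c) (by omega)
  rwa [hG.eq_of_between_of_dist_eq (h₂.trans_left hG.connected hc) h₁ hdc] at hc

lemma between_of_between_of_ne (h₁ : G.Between v q p) (h₂ : G.Between q p r) (hqp : q ≠ p) :
    G.Between v p r := by
  obtain ⟨m, hvm, hpm, hvr⟩ := hG.exists_median v p r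
  rcases le_total (G.dist p m) (G.dist p q) with hle | hle
  · have hpmq := hG.between_of_dist_le hvm.symm h₁.symm hle
    have := hG.connected.dist_triangle (u := q) (v := m) (w := r)
    obtain rfl : p = m := by
      rw [← hG.connected.dist_eq_zero_iff]
      unfold Between at hpmq hpm h₂
      grind [dist_comm]
    exact hvr
  · have hpqr := hpm.trans_left hG.connected (hG.between_of_dist_le h₁.symm hvm.symm hle)
    exact absurd (hG.connected.eq_of_between_of_between h₂.symm hpqr.symm) hqp.symm

lemma isConvex_fixedPoints (φ : G ≃g G) : G.IsConvex (Function.fixedPoints φ) := by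
  intro u c v hu hv h
  have hφc := φ.between_iff.mpr h
  rw [hu.eq, hv.eq] at hφc
  refine hG.eq_of_between_of_dist_eq hφc h ?_
  rw [← φ.dist_eq u c, hu.eq]

lemma between_of_isConvex {C : Set V} (hC : G.IsConvex C) (hr : r ∈ C)
    (hmin : ∀ x ∈ C, G.dist v r ≤ G.dist v x) (hx : x ∈ C) : G.Between v r x := by
  obtain ⟨m, hvm, hmx, hvx⟩ := hG.exists_median v r x
  have := hmin m (hC hr hx hmx)
  obtain rfl : m = r := by
    rw [← hG.connected.dist_eq_zero_iff]
    unfold Between at hvm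
    omega
  exact hvx

lemma exists_bridge {A B : Set V} (hA : G.IsConvex A) (hB : G.IsConvex B) (hAne : A.Nonempty)
    (hBne : B.Nonempty) (hAB : Disjoint A B) :
    ∃ p ∈ A, ∃ q ∈ B, p ≠ q ∧ (∀ x ∈ A, G.Between q p x) ∧ ∀ y ∈ B, G.Between p q y := by
  let d : V × V → ℕ := fun z ↦ G.dist z.1 z.2
  obtain ⟨⟨p, q⟩, ⟨hp, hq⟩, hmin⟩ : ∃ z ∈ A ×ˢ B, ∀ z' ∈ A ×ˢ B, d z ≤ d z' :=
    ⟨_, Function.argminOn_mem d _ (hAne.prod hBne), fun z' hz' ↦ Function.argminOn_le d _ hz'⟩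
  refine ⟨p, hp, q, hq, fun hpq ↦ hAB.ne_of_mem hp hq hpq, fun x hx ↦ ?_, fun y hy ↦ ?_⟩
  · refine hG.between_of_isConvex hA hp (fun x' hx' ↦ ?_) hx
    simpa [d, dist_comm] using hmin (x', q) ⟨hx', hq⟩
  · exact hG.between_of_isConvex hB hq (fun y' hy' ↦ hmin (p, y') ⟨hp, hy'⟩) hy

lemma between_apply_of_forall_dist_le (φ : G ≃g G) (hr : φ r = r)
    (hmin : ∀ x, φ x = x → G.dist v r ≤ G.dist v x) : G.Between v r (φ v) := by
  obtain ⟨m, hvm, hrm, hvφv⟩ := hG.exists_median v r (φ v)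
  have hr' : φ.symm r = r := by rw [RelIso.symm_apply_eq, hr]
  have hφm : G.Between r (φ.symm m) v := by
    simpa [hr'] using φ.symm.between_iff.mpr hrm
  have hm : φ m = m := by
    have := hG.eq_of_between_of_dist_eq hvm.symm hφm (by rw [← φ.symm.dist_eq, hr'])
    exact φ.eq_symm_apply.mp this
  obtain rfl : m = r := by
    have := hmin m hm
    rw [← hG.connected.dist_eq_zero_iff]
    unfold Between at hvm
    omega
  exact hvφv

lemma between_apply_of_fixedPoints_subset (φ : G ≃g G) {A : Set V} (hpq : p ≠ q)
    (hA : ∀ x ∈ A, G.Between q p x) (hφA : Function.fixedPoints φ ⊆ A)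
    (hφ : (Function.fixedPoints φ).Nonempty) (hv : G.Between v q p) :
    G.Between (φ v) p q ∧ φ v ≠ p := by
  obtain ⟨r, hr, hmin⟩ : ∃ r ∈ Function.fixedPoints φ,
      ∀ x ∈ Function.fixedPoints φ, G.dist v r ≤ G.dist v x :=
    ⟨_, Function.argminOn_mem _ _ hφ, fun x hx ↦ Function.argminOn_le (G.dist v) _ hx⟩
  have hvrφ := hG.between_apply_of_forall_dist_le φ hr hmin
  have hvpr := hG.between_of_between_of_ne hv (hA r (hφA hr)) hpq.symm
  have hvpφ := hvrφ.trans_left hG.connected hvpr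
  refine ⟨(hvpφ.trans_left_right hG.connected hv).symm, fun hφv ↦ hpq ?_⟩
  have hd := φ.dist_eq v r
  rw [hφv, hr.eq] at hd
  have hvp : v = p := by
    rw [← hG.connected.dist_eq_zero_iff]
    unfold Between at hvpr
    omega
  subst hvp
  exact hG.connected.eq_of_between_of_between (between_self_left G v q) hv

end IsTree

end SimpleGraph

section Action

variable {G V : Type*} [Group G] [MulAction G V] {T : SimpleGraph V}

def ActsByGraphAutomorphisms.toIso (haut : ActsByGraphAutomorphisms G T) (g : G) : T ≃g T :=
  ⟨MulAction.toPerm g, haut g _ _⟩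

@[simp]
lemma ActsByGraphAutomorphisms.toIso_apply (haut : ActsByGraphAutomorphisms G T) (g : G)
    (v : V) : haut.toIso g v = g • v :=
  rfl

variable (V) in
def stableFixedPoints (g : G) : Set V :=
  {v | ∃ n : ℤ, n ≠ 0 ∧ g ^ n • v = v}

lemma stableFixedPoints_nonempty {g : G} (hg : ∃ v : V, g • v = v) :
    (stableFixedPoints V g).Nonempty :=
  let ⟨v, hv⟩ := hg
  ⟨v, 1, one_ne_zero, by simpa using hv⟩

lemma ActsByGraphAutomorphisms.isConvex_stableFixedPoints (haut : ActsByGraphAutomorphisms G T)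
    (hT : T.IsTree) (g : G) : T.IsConvex (stableFixedPoints V g) := by
  rintro u c w ⟨m, hm, hu⟩ ⟨n, hn, hw⟩ h
  refine ⟨m * n, mul_ne_zero hm hn, ?_⟩
  refine hT.isConvex_fixedPoints (haut.toIso (g ^ (m * n))) ?_ ?_ h
  · simpa [Function.IsFixedPt, zpow_mul] using MulAction.mem_fixedBy_zpow hu n
  · simpa [Function.IsFixedPt, zpow_mul'] using MulAction.mem_fixedBy_zpow hw m

lemma ActsByGraphAutomorphisms.between_smul_of_mem_zpowers (haut : ActsByGraphAutomorphisms G T)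
    (hT : T.IsTree) {g a : G} (hg : ∃ v : V, g • v = v) (ha : a ∈ Subgroup.zpowers g)
    (ha₁ : a ≠ 1) {p q v : V} (hpq : p ≠ q)
    (hp : ∀ x ∈ stableFixedPoints V g, T.Between q p x) (hv : T.Between v q p) :
    T.Between (a • v) p q ∧ a • v ≠ p := by
  obtain ⟨n, rfl⟩ := Subgroup.mem_zpowers_iff.mp ha
  have hn : n ≠ 0 := by
    rintro rfl
    exact ha₁ (zpow_zero g)
  obtain ⟨v₀, hv₀⟩ := hg
  simpa using hT.between_apply_of_fixedPoints_subset (haut.toIso (g ^ n)) hpq hp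
    (fun x hx ↦ ⟨n, hn, hx⟩) ⟨v₀, MulAction.mem_fixedBy_zpow hv₀ n⟩ hv

end Action

open SimpleGraph in
/-- elliptic-elliptic case: two elliptic elements with disjoint stable
fixed-point sets generate the free product of the cyclic groups they generate. -/
theorem free_product_of_disjoint_stable_fixed_sets
    {G V : Type*} [Group G] [MulAction G V] (T : SimpleGraph V) (htree : T.IsTree)
    (haut : ActsByGraphAutomorphisms G T)
    (g h : G)
    (hg : ∃ v : V, g • v = v) (hh : ∃ v : V, h • v = v)
    (hdisj : {v : V | ∃ n : ℤ, n ≠ 0 ∧ g ^ n • v = v} ∩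
        {v : V | ∃ n : ℤ, n ≠ 0 ∧ h ^ n • v = v} = ∅) :
    Function.Injective
      (Monoid.CoprodI.lift
        (fun i : Fin 2 => (![Subgroup.zpowers g, Subgroup.zpowers h] i).subtype) :
        Monoid.CoprodI (fun i : Fin 2 => ↥(![Subgroup.zpowers g, Subgroup.zpowers h] i)) →* G) := by
  obtain ⟨p, -, q, -, hpq, hp, hq⟩ := htree.exists_bridge
    (haut.isConvex_stableFixedPoints htree g) (haut.isConvex_stableFixedPoints htree h)
    (stableFixedPoints_nonempty hg) (stableFixedPoints_nonempty hh) (Set.disjoint_iff_inter_eq_empty.mpr hdisj)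
  refine Monoid.CoprodI.lift_injective_of_ping_pong_of_mem _
    (Y := ![{v | T.Between v p q}, {v | T.Between v q p}]) (x := ![p, q]) ?_ ?_ ?_
  · simp only [Pairwise, Fin.forall_fin_two]
    refine ⟨⟨(absurd rfl ·), fun _ ↦ ?_⟩, fun _ ↦ ?_, (absurd rfl ·)⟩ <;>
      refine Set.disjoint_left.mpr fun v h₁ h₂ ↦ hpq ?_
    exacts [htree.connected.eq_of_between_of_between h₁ h₂,
      htree.connected.eq_of_between_of_between h₂ h₁]
  · exact Fin.forall_fin_two.mpr ⟨between_self_left T p q, between_self_left T q p⟩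
  · simp only [Pairwise, Fin.forall_fin_two]
    refine ⟨⟨(absurd rfl ·), fun _ ↦ ?_⟩, fun _ ↦ ?_, (absurd rfl ·)⟩ <;>
      rintro ⟨a, ha⟩ ha₁ <;> refine Set.smul_set_subset_iff.mpr fun v hv ↦ ?_
    exacts [haut.between_smul_of_mem_zpowers htree hg ha (ha₁ <| Subtype.ext ·) hpq hp hv,
      haut.between_smul_of_mem_zpowers htree hh ha (ha₁ <| Subtype.ext ·) hpq.symm hq hv]
end

section
/- Let V be a type, T : SimpleGraph V a tree, and let a group G act on V so that each g ∈ G is an automorphism of T, without inversions (for no g ∈ G and adjacent u, v does g·u = v and g·v = u). For each vertex v, let K_v be the kernel of the action of Stab_G(v) on the neighbour set of v, and ρ_v : Stab_G(v) → Stab_G(v)/K_v the quotient map. Suppose that for every vertex v: (a) the group Stab_G(v)/K_v is torsion-free, and (b) the family {ρ_v(Stab_G(v) ∩ Stab_G(w)) : w a neighbour of v} is a malnormal collection in Stab_G(v)/K_v, meaning that for all neighbours w, w' of v and all x ∈ Stab_G(v)/K_v, if x·ρ_v(Stab_G(v) ∩ Stab_G(w))·x⁻¹ ∩ ρ_v(Stab_G(v)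 ∩ Stab_G(w')) is nontrivial, then w = w' and x ∈ ρ_v(Stab_G(v) ∩ Stab_G(w)). Then every vertex stabiliser is closed under roots: for all g ∈ G, w ∈ V and n > 0, if gⁿ·w = w then g·w = w. -/
/-- The pointwise stabiliser of the edge `{v, w}`. -/
def edgeStabilizer (G : Type*) {V : Type*} [Group G] [MulAction G V] (v w : V) :
    Subgroup G :=
  MulAction.stabilizer G v ⊓ MulAction.stabilizer G w

/-- The kernel of the action of the stabiliser of `v` on the neighbours of `v`,
viewed as a subgroup of `G`. -/
def neighbourKernel (G : Type*) {V : Type*} [Group G] [MulAction G V] (T : SimpleGraph V)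
    (v : V) : Subgroup G :=
  MulAction.stabilizer G v ⊓ ⨅ w ∈ T.neighborSet v, MulAction.stabilizer G w

/-!
Induct on the length `d` of the path `p` from `w` to `g • w` in the tree. If `p` and `g • p` do
not backtrack where they meet, the translates `p, g • p, …, g ^ (n - 1) • p` concatenate to a
nontrivial path from `w` to `g ^ n • w`, so `g ^ n • w ≠ w`. If they backtrack and `d = 1`, then `g`
inverts the edge `p`. Otherwise `g` maps the second vertex `v` of `p` to its penultimate one, a path
of length `d - 2` away, and `g ^ n` fixes `p` pointwise, so `g` fixes `v` by induction. Then `w`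
and `g • w` are neighbours of `v` whose edge stabilisers both contain `g ^ n`: torsion-freeness
(if `g ^ n` acts trivially on the neighbours of `v`) or malnormality (otherwise) gives `g • w = w`.
-/

open SimpleGraph Walk MulAction

namespace SimpleGraph

variable {V : Type*} {T : SimpleGraph V}

theorem IsAcyclic.isPath_append (hT : T.IsAcyclic) {u v w : V} {p : T.Walk u v}
    {q : T.Walk v w} (hp : p.IsPath) (hq : q.IsPath) (hpq : p.penultimate ≠ q.snd) :
    (p.append q).IsPath := by
  rw [hT.isPath_iff_isChain, edges_append, List.isChain_append, ← hT.isPath_iff_isChain,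
    ← hT.isPath_iff_isChain]
  refine ⟨hp, hq, fun x hx y hy hxy => hpq ?_⟩
  obtain ⟨_, rfl⟩ := List.mem_getLast?_eq_getLast hx
  rw [← List.head_of_mem_head? hy, getLast_edges_eq_mk_penultimate_end,
    head_edges_eq_mk_start_snd, Sym2.eq_iff] at hxy
  grind

theorem IsAcyclic.apply_getVert_eq_self (hT : T.IsAcyclic) (f : T ↪g T) {u v : V}
    {p : T.Walk u v} (hp : p.IsPath) (hu : f u = u) (hv : f v = v) (i : ℕ) :
    f (p.getVert i) = p.getVert i := by
  have hfp : (p.map f.toHom).copy hu hv = p :=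
    congrArg Subtype.val <| (hT.subsingleton_path u v).elim
      ⟨_, (isPath_copy _ _ _).2 (hp.map f.injective)⟩ ⟨p, hp⟩
  simpa using congrArg (getVert · i) hfp

theorem Walk.IsPath.exists_isPath_snd_penultimate {u v : V} {p : T.Walk u v} (hp : p.IsPath)
    (hlen : 2 ≤ p.length) :
    ∃ r : T.Walk p.snd p.penultimate, r.IsPath ∧ r.length = p.length - 2 := by
  have hpen : p.tail.penultimate = p.penultimate := by
    simp only [penultimate, getVert_tail, length_tail]
    congr 1
    omega
  exact ⟨p.tail.dropLast.copy rfl hpen, by simpa using hp.tail.dropLast, by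
    simp only [length_copy, length_dropLast, length_tail]; omega⟩

end SimpleGraph

namespace ActsByGraphAutomorphisms

variable {G V : Type*} [Group G] [MulAction G V] {T : SimpleGraph V}

def toEmbedding (haut : ActsByGraphAutomorphisms G T) (g : G) : T ↪g T where
  toFun := (g • ·)
  inj' := MulAction.injective g
  map_rel_iff' := haut g _ _

@[simp]
theorem toEmbedding_apply (haut : ActsByGraphAutomorphisms G T) (g : G) (v : V) :
    haut.toEmbedding g v = g • v := rfl

theorem pow_smul_ne_of_penultimate_ne (haut : ActsByGraphAutomorphisms G T) (hT : T.IsAcyclic)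
    {g : G} {w : V} {p : T.Walk w (g • w)} (hp : p.IsPath) (hnil : ¬p.Nil)
    (hback : p.penultimate ≠ g • p.snd) {n : ℕ} (hn : 0 < n) : g ^ n • w ≠ w := by
  -- `q.snd = p.snd` is what keeps the junction of `p` and `g • q` from backtracking.
  have translates : ∀ k, 1 ≤ k →
      ∃ q : T.Walk w (g ^ k • w), q.IsPath ∧ ¬q.Nil ∧ q.snd = p.snd := by
    intro k hk
    induction k, hk using Nat.le_induction with
    | base => exact ⟨p.copy rfl (by rw [pow_one]), by simpa using hp, by simpa using hnil, by simp⟩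
    | succ k hk ih =>
      obtain ⟨q, hq, hqnil, hqsnd⟩ := ih
      have hend : (haut.toEmbedding g).toHom (g ^ k • w) = g ^ (k + 1) • w := by
        simp [pow_succ', mul_smul]
      obtain ⟨gq, hgq, hgqsnd⟩ :
          ∃ r : T.Walk (g • w) (g ^ (k + 1) • w), r.IsPath ∧ r.snd = g • p.snd := by
        refine ⟨(q.map (haut.toEmbedding g).toHom).copy (haut.toEmbedding_apply g w) hend, ?_, ?_⟩
        · rw [isPath_copy]
          exact hq.map (f := (haut.toEmbedding g).toHom) (MulAction.injective g)
        · rw [snd, getVert_copy, getVert_map, ← hqsnd]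
          rfl
      refine ⟨p.append gq, hT.isPath_append hp hgq (hgqsnd ▸ hback), ?_, ?_⟩
      · exact nil_append_iff.not.2 (not_and_of_not_left _ hnil)
      · rw [snd, getVert_append', if_pos (not_nil_iff_lt_length.1 hnil).nat_succ_le]
  intro hgw
  obtain ⟨q, hq, hqnil, -⟩ := translates n hn
  exact hqnil (by simpa using isPath_iff_nil.1 ((isPath_copy _ rfl hgw).2 hq))

theorem smul_eq_of_pow_smul_eq_of_isPath (haut : ActsByGraphAutomorphisms G T) (hT : T.IsAcyclic)
    {g : G} {n : ℕ} (hn : 0 < n) (hnoinv : ∀ u v : V, T.Adj u v → ¬(g • u = v ∧ g • v = u))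
    (hlocal : ∀ v w : V, g • v = v → T.Adj v w → g ^ n • w = w → g • w = w)
    {w : V} {p : T.Walk w (g • w)} (hp : p.IsPath) (hgw : g ^ n • w = w) : g • w = w := by
  induction hd : p.length using Nat.strong_induction_on generalizing w with
  | _ d ih =>
  subst hd
  by_cases hnil : p.Nil
  · exact hnil.eq.symm
  by_cases hback : p.penultimate = g • p.snd
  swap
  · exact absurd hgw (haut.pow_smul_ne_of_penultimate_ne hT hp hnil hback hn)
  obtain hlen | hlen : p.length = 1 ∨ 2 ≤ p.length := by
    have := not_nil_iff_lt_length.1 hnil; omega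
  · have hsnd : p.snd = g • w := by rw [snd, ← hlen, getVert_length]
    have hpen : p.penultimate = w := by rw [penultimate, hlen, getVert_zero]
    rw [hsnd, hpen] at hback
    exact absurd ⟨rfl, hback.symm⟩ (hnoinv w (g • w) (hsnd ▸ p.adj_snd hnil))
  · obtain ⟨r, hr, hrlen⟩ := hp.exists_isPath_snd_penultimate hlen
    have hgn_snd : g ^ n • p.snd = p.snd := by
      refine hT.apply_getVert_eq_self (haut.toEmbedding (g ^ n)) hp hgw ?_ 1
      rw [toEmbedding_apply, smul_smul, ← pow_succ, pow_succ', mul_smul, hgw]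
    have hg_snd : g • p.snd = p.snd :=
      ih (p.length - 2) (by omega) (p := r.copy rfl hback) (by simpa using hr) hgn_snd
        (by simpa using hrlen)
    exact hlocal p.snd w hg_snd (p.adj_snd hnil).symm hgw

theorem smul_eq_of_pow_smul_eq_of_adj (haut : ActsByGraphAutomorphisms G T) {v : V}
    (htorsionfree : ∀ g ∈ stabilizer G v, ∀ n : ℕ, 0 < n →
      g ^ n ∈ neighbourKernel G T v → g ∈ neighbourKernel G T v)
    (hdisjoint : ∀ w w' : V, T.Adj v w → T.Adj v w' → ∀ a ∈ edgeStabilizer G v w,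
      a ∈ edgeStabilizer G v w' → a ∉ neighbourKernel G T v → w = w')
    {g : G} (hg : g • v = v) {w : V} (hvw : T.Adj v w) {n : ℕ} (hn : 0 < n)
    (hgw : g ^ n • w = w) : g • w = w := by
  have hgn : g ^ n ∈ stabilizer G v := pow_mem (mem_stabilizer_iff.2 hg) n
  by_cases hK : g ^ n ∈ neighbourKernel G T v
  · have hgK := Subgroup.mem_inf.1 (htorsionfree g hg n hn hK)
    simp only [Subgroup.mem_iInf] at hgK
    exact hgK.2 w hvw
  · have hvgw : T.Adj v (g • w) := by simpa [hg] using (haut g v w).2 hvw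
    have hgn_gw : g ^ n • g • w = g • w := by
      rw [smul_smul, ← pow_succ, pow_succ', mul_smul, hgw]
    exact (hdisjoint w (g • w) hvw hvgw (g ^ n) ⟨hgn, hgw⟩ ⟨hgn, hgn_gw⟩ hK).symm

end ActsByGraphAutomorphisms

/-- Membership in a coset of `neighbourKernel G T v` expresses equality of images under the
quotient map `ρ_v : Stab_G(v) → Stab_G(v)/K_v`. -/
theorem stabilizers_closed_under_roots_of_malnormal
    {G V : Type*} [Group G] [MulAction G V] (T : SimpleGraph V) (htree : T.IsTree)
    (haut : ActsByGraphAutomorphisms G T)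
    (hnoinv : ∀ (g : G) (u v : V), T.Adj u v → ¬(g • u = v ∧ g • v = u))
    (htorsionfree : ∀ v : V, ∀ g ∈ MulAction.stabilizer G v, ∀ n : ℕ, 0 < n →
      g ^ n ∈ neighbourKernel G T v → g ∈ neighbourKernel G T v)
    (hmalnormal : ∀ v w w' : V, T.Adj v w → T.Adj v w' →
      ∀ x ∈ MulAction.stabilizer G v,
        (∃ a ∈ edgeStabilizer G v w, x * a * x⁻¹ ∉ neighbourKernel G T v ∧
          ∃ b ∈ edgeStabilizer G v w', (x * a * x⁻¹) * b⁻¹ ∈ neighbourKernel G T v) →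
        w = w' ∧ ∃ c ∈ edgeStabilizer G v w, x * c⁻¹ ∈ neighbourKernel G T v) :
    ∀ (g : G) (w : V) (n : ℕ), 0 < n → g ^ n • w = w → g • w = w := by
  intro g w n hn hgw
  obtain ⟨p, hp, -⟩ := htree.existsUnique_path w (g • w)
  refine haut.smul_eq_of_pow_smul_eq_of_isPath htree.isAcyclic hn (hnoinv g)
    (fun v w hgv hvw hgw => ?_) hp hgw
  refine haut.smul_eq_of_pow_smul_eq_of_adj (htorsionfree v)
    (fun w w' hw hw' a ha ha' haK => ?_) hgv hvw hn hgw
  exact (hmalnormal v w w' hw hw' 1 (one_mem _)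
    ⟨a, ha, by simpa using haK, a, ha', by simp [one_mem]⟩).1
end

section
/- Let Γ be a finite labelled simple graph with vertex set V and Artin group A_Γ, expressed as a visual splitting: V = V₁ ∪ V₂ with V₁, V₂ proper subsets and V₀ := V₁ ∩ V₂ nonempty, such that A_{V₁} and A_{V₂} satisfy the power alternative and A_Γ has the parabolic intersection property and the normaliser structure property. Let S ⊆ V₁ or S ⊆ V₂, let g₀ ∈ A_Γ and set P = g₀·A_S·g₀⁻¹ (a parabolic subgroup conjugate into a factor). Let z ∈ A_Γ normalise P (z·P·z⁻¹ = P) and let H = ⟨P ∪ {z}⟩ be the subgroup generated by P and z. Then either P has finite index in H, or H contains a finite-index subgroup isomorphic to P × ℤ; in particular, H satisfies the power alternative. -/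
open scoped Classical

/-- The alternating word `stst⋯` of length `k` in the free group on `V`. -/
def artinWord {V : Type*} (s t : V) (k : ℕ) : FreeGroup V :=
  ((List.range k).map (fun i => if i % 2 = 0 then FreeGroup.of s else FreeGroup.of t)).prod

/-- The Artin relations of a labelled graph. -/
def artinRels {V : Type*} (Γ : SimpleGraph V) (m : V → V → ℕ) : Set (FreeGroup V) :=
  {r | ∃ s t : V, Γ.Adj s t ∧ r = artinWord s t (m s t) * (artinWord t s (m s t))⁻¹}

/-- The Artin group of a labelled graph. -/
abbrev ArtinGroup {V : Type*} (Γ : SimpleGraph V) (m : V → V → ℕ) : Type _ :=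
  PresentedGroup (artinRels Γ m)

/-- The standard generator of the Artin group associated to the vertex `v`. -/
def artinGen {V : Type*} (Γ : SimpleGraph V) (m : V → V → ℕ) (v : V) : ArtinGroup Γ m :=
  PresentedGroup.of v

/-- The standard parabolic subgroup of `A_Γ` generated by `S ⊆ V`. -/
def standardParabolic {V : Type*} (Γ : SimpleGraph V) (m : V → V → ℕ) (S : Set V) :
    Subgroup (ArtinGroup Γ m) :=
  Subgroup.closure (artinGen Γ m '' S)

/-- The conjugate `g P g⁻¹` of a subgroup `P`. -/
def conjSubgroup {G : Type*} [Group G] (g : G) (P : Subgroup G) : Subgroup G :=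
  Subgroup.map (MulAut.conj g).toMonoidHom P

/-- Parabolic subgroups: conjugates of standard parabolic subgroups. -/
def IsParabolic {V : Type*} (Γ : SimpleGraph V) (m : V → V → ℕ)
    (P : Subgroup (ArtinGroup Γ m)) : Prop :=
  ∃ (g : ArtinGroup Γ m) (S : Set V), P = conjSubgroup g (standardParabolic Γ m S)

/-- The parabolic intersection property. -/
def ParabolicIntersectionProperty {V : Type*} (Γ : SimpleGraph V) (m : V → V → ℕ) : Prop :=
  ∀ P Q : Subgroup (ArtinGroup Γ m), IsParabolic Γ m P → IsParabolic Γ m Q →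
    IsParabolic Γ m (P ⊓ Q)

/-- The normaliser structure property. -/
def NormaliserStructureProperty {V : Type*} (Γ : SimpleGraph V) (m : V → V → ℕ) : Prop :=
  ∀ S : Set V,
    ((Subgroup.normalizer (standardParabolic Γ m S : Set (ArtinGroup Γ m))) : Set (ArtinGroup Γ m)) =
      {x | ∃ a ∈ standardParabolic Γ m S, ∃ q : ArtinGroup Γ m,
        ((fun y => q * y * q⁻¹) '' (artinGen Γ m '' S) = artinGen Γ m '' S) ∧ x = a * q}

/-!
Conjugating by `g₀`, the normaliser structure property writes `g₀⁻¹ z g₀ = a q` with `a ∈ A_S` and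
`q` permuting the finite set `σ(S)`. Some power `q^k` therefore centralises `A_S`, and
`z^k = p c` with `p ∈ P` and `c` centralising `P`. If a nonzero power of `z` lies in `P`, then `P`
has finite index in `H = P ⊔ ⟨z⟩`. Otherwise no nonzero power of `c` lies in `P`, so
`P ⊔ ⟨c⟩ = P ⊔ ⟨z^k⟩` is isomorphic to `P × ℤ`, and it has finite index in `H` because `z`
normalises it. The power alternative passes from `A_{V_i}` to `P` and to `P × ℤ`, and from a
finite-index subgroup to the whole group.
-/

open Subgroup

section PowerAlternative

variable {G G' : Type*} [Group G] [Group G']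

theorem FreelyGenerateF2.lift_comp (f : G →* G') (x y : G) :
    (FreeGroup.lift (fun i : Fin 2 => if i = 0 then f x else f y) : FreeGroup (Fin 2) →* G') =
      f.comp (FreeGroup.lift fun i : Fin 2 => if i = 0 then x else y) :=
  FreeGroup.ext_hom _ _ fun i => by simp [apply_ite f]

theorem FreelyGenerateF2.map {f : G →* G'} (hf : Function.Injective f) {x y : G}
    (h : FreelyGenerateF2 x y) : FreelyGenerateF2 (f x) (f y) := by
  unfold FreelyGenerateF2 at *
  rw [FreelyGenerateF2.lift_comp]
  exact hf.comp h

theorem FreelyGenerateF2.of_map (f : G →* G') {x y : G} (h : FreelyGenerateF2 (f x) (f y)) :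
    FreelyGenerateF2 x y := by
  unfold FreelyGenerateF2 at *
  rw [FreelyGenerateF2.lift_comp, MonoidHom.coe_comp] at h
  exact h.of_comp

theorem PowerAlternative.of_injective (f : G →* G') (hf : Function.Injective f)
    (h : PowerAlternative G') : PowerAlternative G := by
  intro x y
  obtain ⟨n, hn, hxy⟩ := h (f x) (f y)
  rw [← map_pow, ← map_pow] at hxy
  exact ⟨n, hn, hxy.imp (·.of_map hf) (.of_map f)⟩

theorem PowerAlternative.of_mulEquiv (e : G ≃* G') (h : PowerAlternative G') :
    PowerAlternative G :=
  h.of_injective e.toMonoidHom e.injective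

theorem PowerAlternative.of_le {K L : Subgroup G} (hKL : K ≤ L) (h : PowerAlternative L) :
    PowerAlternative K :=
  h.of_injective (inclusion hKL) (inclusion_injective hKL)

theorem PowerAlternative.prod_multiplicative_int (h : PowerAlternative G) :
    PowerAlternative (G × Multiplicative ℤ) := by
  rintro ⟨a, b⟩ ⟨a', b'⟩
  obtain ⟨n, hn, hcomm | hfree⟩ := h a a'
  · exact ⟨n, hn, .inl (Prod.commute_iff.2 ⟨hcomm, Commute.all _ _⟩)⟩
  · exact ⟨n, hn, .inr (.of_map (MonoidHom.fst G (Multiplicative ℤ)) hfree)⟩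

theorem PowerAlternative.of_index_ne_zero {K : Subgroup G} (hK : K.index ≠ 0)
    (h : PowerAlternative K) : PowerAlternative G := by
  intro x y
  obtain ⟨a, ha, -, hxa⟩ := K.exists_pow_mem_of_index_ne_zero hK x
  obtain ⟨b, hb, -, hyb⟩ := K.exists_pow_mem_of_index_ne_zero hK y
  have hx : x ^ (a * b) ∈ K := by rw [pow_mul]; exact pow_mem hxa b
  have hy : y ^ (a * b) ∈ K := by rw [mul_comm, pow_mul]; exact pow_mem hyb a
  obtain ⟨n, hn, hxy⟩ := h ⟨_, hx⟩ ⟨_, hy⟩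
  refine ⟨a * b * n, Nat.one_le_iff_ne_zero.2 (by positivity), ?_⟩
  rw [pow_mul x, pow_mul y]
  exact hxy.imp (fun hc => by simpa using hc.map K.subtype) (fun hf => by
    simpa using hf.map K.subtype_injective)

theorem PowerAlternative.of_relIndex_ne_zero {K H : Subgroup G} (hKH : K ≤ H)
    (hK : K.relIndex H ≠ 0) (h : PowerAlternative K) : PowerAlternative H :=
  PowerAlternative.of_index_ne_zero hK (h.of_mulEquiv (subgroupOfEquivOfLe hKH))

end PowerAlternative

namespace Subgroup

variable {G G' : Type*} [Group G] [Group G']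

theorem closure_coe_union_singleton (N : Subgroup G) (z : G) :
    closure ((N : Set G) ∪ {z}) = N ⊔ zpowers z := by
  rw [closure_union, closure_eq, zpowers_eq_closure]

theorem relIndex_sup_left_of_le_normalizer {H N : Subgroup G} (hLE : H ≤ normalizer (N : Set G)) :
    N.relIndex (H ⊔ N) = N.relIndex H := by
  have := normal_subgroupOf_of_le_normalizer hLE
  have := normal_subgroupOf_sup_of_le_normalizer hLE
  exact Nat.card_congr (QuotientGroup.quotientInfEquivProdNormalizerQuotient H N hLE).toEquiv.symm

theorem relIndex_zpowers_ne_zero {N : Subgroup G} {z : G} {k : ℤ} (hk : k ≠ 0)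
    (hzk : z ^ k ∈ N) : N.relIndex (zpowers z) ≠ 0 := by
  have : NeZero k.natAbs := ⟨Int.natAbs_ne_zero.2 hk⟩
  let w : zpowers z := ⟨z, mem_zpowers z⟩
  have hsurj : Function.Surjective fun j : ZMod k.natAbs =>
      ((w ^ (j.val : ℤ) : zpowers z) : zpowers z ⧸ N.subgroupOf (zpowers z)) := by
    rintro ⟨x, i, rfl⟩
    refine ⟨i, QuotientGroup.eq.2 ?_⟩
    have hval : ((i : ZMod k.natAbs).val : ℤ) = i % k := by
      rw [ZMod.val_intCast, Int.natCast_natAbs, Int.emod_abs]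
    rw [mem_subgroupOf, coe_mul, coe_inv, coe_zpow, hval, ← zpow_neg, ← zpow_add,
      show -(i % k) + i = k * (i / k) by rw [Int.emod_def]; ring, zpow_mul]
    exact zpow_mem hzk _
  have : Finite (zpowers z ⧸ N.subgroupOf (zpowers z)) := Finite.of_surjective _ hsurj
  exact index_ne_zero_of_finite

theorem relIndex_sup_zpowers_ne_zero {N : Subgroup G} {z : G} (hz : z ∈ normalizer (N : Set G))
    {k : ℤ} (hk : k ≠ 0) (hzk : z ^ k ∈ N) : N.relIndex (N ⊔ zpowers z) ≠ 0 := by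
  rw [sup_comm, relIndex_sup_left_of_le_normalizer (zpowers_le.2 hz)]
  exact relIndex_zpowers_ne_zero hk hzk

theorem sup_zpowers_mul_of_mem {N : Subgroup G} {p : G} (hp : p ∈ N) (c : G) :
    N ⊔ zpowers (p * c) = N ⊔ zpowers c := by
  have key : ∀ {p}, p ∈ N → ∀ c, N ⊔ zpowers (p * c) ≤ N ⊔ zpowers c := fun hp c =>
    sup_le le_sup_left (zpowers_le.2 (mul_mem (mem_sup_left hp) (mem_sup_right (mem_zpowers c))))
  refine le_antisymm (key hp c) ?_
  simpa using key (inv_mem hp) (p * c)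

theorem sup_zpowers_pow_relIndex_ne_zero {N : Subgroup G} {z : G}
    (hz : z ∈ normalizer (N : Set G)) {k : ℕ} (hk : k ≠ 0) :
    (N ⊔ zpowers (z ^ k)).relIndex (N ⊔ zpowers z) ≠ 0 := by
  have hzk : z ∈ centralizer (zpowers (z ^ k) : Set G) := by
    rintro - ⟨i, rfl⟩
    exact ((Commute.refl z).pow_left k).zpow_left i
  have hz' : z ∈ normalizer ((N ⊔ zpowers (z ^ k) : Subgroup G) : Set G) :=
    normalizer_inf_normalizer_le_normalizer_sup _ _ ⟨hz, centralizer_le_normalizer _ hzk⟩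
  have := relIndex_sup_zpowers_ne_zero hz' (k := k) (by exact_mod_cast hk)
    (mem_sup_right (by rw [zpow_natCast]; exact mem_zpowers _))
  rwa [sup_assoc, sup_of_le_right (zpowers_le.2 (pow_mem (mem_zpowers z) k))] at this

noncomputable def supZPowersEquivProd {N : Subgroup G} {c : G} (hc : c ∈ centralizer (N : Set G))
    (hfree : ∀ n : ℤ, c ^ n ∈ N → n = 0) : ↥(N ⊔ zpowers c) ≃* N × Multiplicative ℤ :=
  let φ := N.subtype.noncommCoprod (zpowersHom G c) fun x n =>
    Commute.zpow_right (mem_centralizer_iff.1 hc x x.2) n.toAdd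
  have hφ : Function.Injective φ := by
    refine (MonoidHom.noncommCoprod_injective _ _ _).2 ⟨N.subtype_injective, ?_, ?_⟩
    · refine (injective_iff_map_eq_one _).2 fun n hn => ?_
      exact toAdd_eq_zero.1 (hfree _ (by rw [← zpowersHom_apply, hn]; exact one_mem N))
    · rw [disjoint_def]
      rintro - ⟨x, rfl⟩ ⟨n, hn⟩
      have h0 := hfree n.toAdd (by rw [show c ^ n.toAdd = x from hn]; exact x.2)
      rw [← hn, zpowersHom_apply, h0, zpow_zero]
  have hrange : φ.range = N ⊔ zpowers c := (MonoidHom.noncommCoprod_range _ _ _).trans <| by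
    rw [range_subtype, range_zpowersHom]
  ((MonoidHom.ofInjective hφ).trans (MulEquiv.subgroupCongr hrange)).symm

-- `N ⊔ centralizer N` consists of the elements acting on `N` by an inner automorphism.
def HasInnerPower (N : Subgroup G) (z : G) : Prop :=
  ∃ k : ℕ, k ≠ 0 ∧ z ^ k ∈ N ⊔ centralizer (N : Set G)

theorem HasInnerPower.map {N : Subgroup G} {z : G} (f : G →* G') (h : N.HasInnerPower z) :
    (N.map f).HasInnerPower (f z) := by
  obtain ⟨k, hk, hzk⟩ := h
  have hcent : (centralizer (N : Set G)).map f ≤ centralizer (N.map f : Set G') := by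
    simpa [coe_map] using map_centralizer_le_centralizer_image (N : Set G) f
  refine ⟨k, hk, ?_⟩
  rw [← map_pow]
  exact sup_le_sup_left hcent _ (map_sup N _ f ▸ mem_map_of_mem f hzk)

theorem sup_zpowers_finiteIndex_or_prod_int {N : Subgroup G} {z : G}
    (hz : z ∈ normalizer (N : Set G)) (hN : N.HasInnerPower z) :
    N.relIndex (N ⊔ zpowers z) ≠ 0 ∨
      ∃ H' ≤ N ⊔ zpowers z, H'.relIndex (N ⊔ zpowers z) ≠ 0 ∧
        Nonempty (H' ≃* N × Multiplicative ℤ) := by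
  by_cases hfree : ∀ n : ℤ, z ^ n ∈ N → n = 0
  swap
  · push Not at hfree
    obtain ⟨n, hn, hn0⟩ := hfree
    exact .inl (relIndex_sup_zpowers_ne_zero hz hn0 hn)
  obtain ⟨k, hk, hzk⟩ := hN
  rw [← SetLike.mem_coe, coe_mul_of_right_le_normalizer_left _ _ (centralizer_le_normalizer _)]
    at hzk
  obtain ⟨p, hp, c, hc, hpc⟩ := hzk
  have hcfree : ∀ n : ℤ, c ^ n ∈ N → n = 0 := by
    intro n hn
    have : z ^ ((k : ℤ) * n) ∈ N := by
      rw [zpow_mul, zpow_natCast, ← hpc, Commute.mul_zpow (mem_centralizer_iff.1 hc p hp)]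
      exact mul_mem (zpow_mem hp n) hn
    simpa [hk] using hfree _ this
  have hsup : N ⊔ zpowers c = N ⊔ zpowers (z ^ k) := by rw [← hpc, sup_zpowers_mul_of_mem hp]
  refine .inr ⟨N ⊔ zpowers c, ?_, ?_, ⟨supZPowersEquivProd hc hcfree⟩⟩
  · exact hsup ▸ sup_le_sup_left (zpowers_le.2 (pow_mem (mem_zpowers z) k)) N
  · exact hsup ▸ sup_zpowers_pow_relIndex_ne_zero hz hk

theorem exists_pow_mem_centralizer_of_mem_normalizer {T : Set G} (hT : T.Finite) {q : G}
    (hq : q ∈ normalizer T) : ∃ k : ℕ, k ≠ 0 ∧ q ^ k ∈ centralizer T := by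
  have : Finite T := hT.to_subtype
  have hσ (x : G) : MulAut.toPerm G (MulAut.conj q) x ∈ T ↔ x ∈ T :=
    (mem_set_normalizer_iff.1 hq x).symm
  let σ : Equiv.Perm T := (MulAut.toPerm G (MulAut.conj q)).subtypePerm hσ
  suffices key : ∀ k : ℕ, σ ^ k = 1 → q ^ k ∈ centralizer T from
    ⟨_, (orderOf_pos σ).ne', key _ (pow_orderOf_eq_one σ)⟩
  refine fun k hk => mem_centralizer_iff.2 fun x hx => ?_
  have h := congrArg (fun τ : Equiv.Perm T => (τ ⟨x, hx⟩ : G)) hk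
  simp only [σ] at h
  rw [Equiv.Perm.subtypePerm_pow, Equiv.Perm.subtypePerm_apply] at h
  replace h : MulAut.toPerm G (MulAut.conj (q ^ k)) x = x := by rwa [map_pow, map_pow]
  change q ^ k * x * (q ^ k)⁻¹ = x at h
  rw [mul_inv_eq_iff_eq_mul] at h
  exact h.symm

theorem mul_pow_mul_inv_pow_mem {N : Subgroup G} {a q : G} (ha : a ∈ N)
    (hq : q ∈ normalizer (N : Set G)) (k : ℕ) : (a * q) ^ k * (q ^ k)⁻¹ ∈ N := by
  induction k with
  | zero => simp
  | succ k ih =>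
    have h : (a * q) ^ (k + 1) * (q ^ (k + 1))⁻¹ =
        (a * q) ^ k * (q ^ k)⁻¹ * (q ^ k * a * (q ^ k)⁻¹) := by
      rw [pow_succ, pow_succ]; group
    rw [h]
    exact mul_mem ih ((mem_normalizer_iff.1 (pow_mem hq k) a).1 ha)

end Subgroup

section Artin

variable {V : Type*} {Γ : SimpleGraph V} {m : V → V → ℕ}

theorem standardParabolic_mono {S T : Set V} (h : S ⊆ T) :
    standardParabolic Γ m S ≤ standardParabolic Γ m T :=
  closure_mono (Set.image_mono h)

theorem NormaliserStructureProperty.hasInnerPower (hNSP : NormaliserStructureProperty Γ m)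
    {S : Set V} (hS : S.Finite) {w : ArtinGroup Γ m}
    (hw : w ∈ normalizer (standardParabolic Γ m S : Set (ArtinGroup Γ m))) :
    (standardParabolic Γ m S).HasInnerPower w := by
  rw [← SetLike.mem_coe, hNSP S] at hw
  obtain ⟨a, ha, q, hq, rfl⟩ := hw
  have hqT : q ∈ normalizer (artinGen Γ m '' S) := mem_normalizer_iff_conj_image_eq.2 hq
  obtain ⟨k, hk, hqk⟩ := exists_pow_mem_centralizer_of_mem_normalizer (hS.image _) hqT
  refine ⟨k, hk, ?_⟩
  rw [← inv_mul_cancel_right ((a * q) ^ k) (q ^ k)]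
  refine mul_mem (mem_sup_left ?_) (mem_sup_right ?_)
  · exact mul_pow_mul_inv_pow_mem ha (normalizer_le_normalizer_closure _ hqT) k
  · rwa [standardParabolic, centralizer_closure]

end Artin

theorem artin_visual_splitting_mapping_torus_power_alternative_general
    {V : Type*} [Fintype V] (Γ : SimpleGraph V) (m : V → V → ℕ)
    (V₁ V₂ : Set V)
    (hPA₁ : PowerAlternative (standardParabolic Γ m V₁))
    (hPA₂ : PowerAlternative (standardParabolic Γ m V₂))
    (hNSP : NormaliserStructureProperty Γ m)
    (S : Set V) (hS : S ⊆ V₁ ∨ S ⊆ V₂)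
    (g₀ : ArtinGroup Γ m)
    (P : Subgroup (ArtinGroup Γ m)) (hP : P = conjSubgroup g₀ (standardParabolic Γ m S))
    (z : ArtinGroup Γ m) (hz : conjSubgroup z P = P)
    (H : Subgroup (ArtinGroup Γ m))
    (hH : H = Subgroup.closure ((P : Set (ArtinGroup Γ m)) ∪ {z})) :
    (P.relIndex H ≠ 0 ∨
      ∃ H' : Subgroup (ArtinGroup Γ m), H' ≤ H ∧ H'.relIndex H ≠ 0 ∧
        Nonempty (H' ≃* (P × Multiplicative ℤ))) ∧
    PowerAlternative H := by
  have hPA_S : PowerAlternative (standardParabolic Γ m S) :=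
    hS.elim (fun h => hPA₁.of_le (standardParabolic_mono h))
      (fun h => hPA₂.of_le (standardParabolic_mono h))
  have hPA_P : PowerAlternative P :=
    hP ▸ hPA_S.of_mulEquiv (MulEquiv.subgroupMap (MulAut.conj g₀) _).symm
  have hzP : z ∈ normalizer (P : Set (ArtinGroup Γ m)) := mem_normalizer_iff_map_conj_eq.2 hz
  have hinner : P.HasInnerPower z := by
    rw [hP, conjSubgroup, ← map_equiv_normalizer_eq] at hzP
    obtain ⟨w, hw, rfl⟩ := hzP
    exact hP ▸ (hNSP.hasInnerPower S.toFinite hw).map _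
  rw [hH, closure_coe_union_singleton]
  have hdich := sup_zpowers_finiteIndex_or_prod_int hzP hinner
  refine ⟨hdich, ?_⟩
  rcases hdich with hfin | ⟨H', hH'le, hH', ⟨e⟩⟩
  · exact hPA_P.of_relIndex_ne_zero le_sup_left hfin
  · exact (hPA_P.prod_multiplicative_int.of_mulEquiv e).of_relIndex_ne_zero hH'le hH'

/-- mapping tori of parabolic subgroups in a visual splitting satisfy
the power alternative. -/
theorem artin_visual_splitting_mapping_torus_power_alternative
    {V : Type*} [Fintype V] (Γ : SimpleGraph V) (m : V → V → ℕ)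
    (hsymm : ∀ s t : V, m s t = m t s)
    (hlabel : ∀ s t : V, Γ.Adj s t → 2 ≤ m s t)
    (V₁ V₂ : Set V)
    (hunion : V₁ ∪ V₂ = Set.univ)
    (hV₁ : V₁ ≠ Set.univ) (hV₂ : V₂ ≠ Set.univ)
    (hV₀ : (V₁ ∩ V₂).Nonempty)
    (hPA₁ : PowerAlternative (standardParabolic Γ m V₁))
    (hPA₂ : PowerAlternative (standardParabolic Γ m V₂))
    (hPIP : ParabolicIntersectionProperty Γ m)
    (hNSP : NormaliserStructureProperty Γ m)
    (S : Set V) (hS : S ⊆ V₁ ∨ S ⊆ V₂)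
    (g₀ : ArtinGroup Γ m)
    (P : Subgroup (ArtinGroup Γ m)) (hP : P = conjSubgroup g₀ (standardParabolic Γ m S))
    (z : ArtinGroup Γ m) (hz : conjSubgroup z P = P)
    (H : Subgroup (ArtinGroup Γ m))
    (hH : H = Subgroup.closure ((P : Set (ArtinGroup Γ m)) ∪ {z})) :
    (P.relIndex H ≠ 0 ∨
      ∃ H' : Subgroup (ArtinGroup Γ m), H' ≤ H ∧ H'.relIndex H ≠ 0 ∧
        Nonempty (H' ≃* (P × Multiplicative ℤ))) ∧
    PowerAlternative H :=
  artin_visual_splitting_mapping_torus_power_alternative_general Γ m V₁ V₂ hPA₁ hPA₂ hNSP S hS g₀ P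
    hP z hz H hH
end

section
/- Let G₁ and G₂ be groups. If G₁ and G₂ both satisfy the power alternative, then the direct product G₁ × G₂ satisfies the power alternative. -/
/-! Freeness of a pair pulls back along homomorphisms, so a free pair of powers in either
factor gives one in the product. Otherwise the first coordinates of `g ^ n, h ^ n` commute,
and applying the alternative in `G₂` to the second coordinates of these powers yields a common
exponent `n * m` at which either both coordinates commute or the second ones are free. -/

theorem FreelyGenerateF2.of_map_s13 {G H : Type*} [Group G] [Group H] (φ : G →* H) {x y : G}
    (h : FreelyGenerateF2 (φ x) (φ y)) : FreelyGenerateF2 x y := by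
  have lift_map : (FreeGroup.lift fun i : Fin 2 => if i = 0 then φ x else φ y) =
      φ.comp (FreeGroup.lift fun i : Fin 2 => if i = 0 then x else y) :=
    FreeGroup.ext_hom _ _ fun i => by simp [apply_ite φ]
  unfold FreelyGenerateF2 at h
  rw [lift_map, MonoidHom.coe_comp] at h
  exact h.of_comp

/-- the power alternative is stable under direct products. -/
theorem power_alternative_prod
    {G₁ G₂ : Type*} [Group G₁] [Group G₂]
    (h₁ : PowerAlternative G₁) (h₂ : PowerAlternative G₂) :
    PowerAlternative (G₁ × G₂) := by
  intro g h
  obtain ⟨n, hn, hc₁ | hf₁⟩ := h₁ g.1 h.1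
  · obtain ⟨m, hm, hc₂ | hf₂⟩ := h₂ (g.2 ^ n) (h.2 ^ n)
    all_goals refine ⟨n * m, Nat.one_le_iff_ne_zero.2 (by positivity), ?_⟩
    · refine .inl (.prod ?_ ?_)
      · simpa [pow_mul] using hc₁.pow_pow m m
      · simpa [pow_mul] using hc₂
    · exact .inr (.of_map (MonoidHom.snd G₁ G₂) (by simpa [pow_mul] using hf₂))
  · exact ⟨n, hn, .inr (.of_map (MonoidHom.fst G₁ G₂) (by simpa using hf₁))⟩
end

section
/- For every integer n ≥ 2, the Baumslag–Solitar group BS(1,n) = ⟨a, b ∣ b·a·b⁻¹ = aⁿ⟩ (the presented group on two generators a, b with the single relator b·a·b⁻¹·a⁻ⁿ) does not satisfy the power alternative: there exist g, h ∈ BS(1,n) such that for every k ≥ 1, gᵏ and hᵏ do not commute and gᵏ and hᵏ do not freely generate a free subgroup of rank 2. -/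
/-- The single relator `b a b⁻¹ a⁻ⁿ` of the Baumslag–Solitar group `BS(1,n)`,
with `a` the generator indexed by `0` and `b` the generator indexed by `1`. -/
def bsRels (n : ℕ) : Set (FreeGroup (Fin 2)) :=
  {FreeGroup.of 1 * FreeGroup.of 0 * (FreeGroup.of 1)⁻¹ * (FreeGroup.of 0 ^ n)⁻¹}

/-- The Baumslag–Solitar group `BS(1,n) = ⟨a, b ∣ b a b⁻¹ = aⁿ⟩`. -/
abbrev BaumslagSolitar (n : ℕ) : Type := PresentedGroup (bsRels n)

/-!
Take `g = a` and `h = b`. The relation `b a b⁻¹ = aⁿ` gives `bᵏ aᵏ b⁻ᵏ = a^(nᵏ k)`, which commutes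
with `aᵏ`; so `(aᵏ, bᵏ)` satisfies the nontrivial relation `⁅y x y⁻¹, x⁆ = 1` and is not free.
If `aᵏ` and `bᵏ` commuted, the same identity would give `a^(nᵏ k) = aᵏ`, impossible since `a` has
infinite order: in the affine action `a : x ↦ 1 + x`, `b : x ↦ n x` on `ℚ` it acts as a translation.
-/

theorem AddAction.toPerm_pow {G α : Type*} [AddGroup G] [AddAction G α] (a : G) (m : ℕ) :
    (AddAction.toPerm a : Equiv.Perm α) ^ m = AddAction.toPerm (m • a) := by
  change _ = Additive.toMul (AddAction.toPermHom G α (m • a))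
  rw [map_nsmul, toMul_nsmul]
  rfl

theorem AddAction.not_isOfFinOrder_toPerm {G : Type*} [AddGroup G] [IsAddTorsionFree G] {a : G}
    (ha : a ≠ 0) : ¬IsOfFinOrder (AddAction.toPerm a : Equiv.Perm G) := by
  rw [isOfFinOrder_iff_pow_eq_one]
  rintro ⟨m, hm, hpow⟩
  have hma : m • a = 0 := by
    simpa [AddAction.toPerm_pow] using Equiv.congr_fun hpow 0
  exact ha ((nsmul_eq_zero_iff_right hm.ne').mp hma)

theorem SemiconjBy.pow_left_of_pow {M : Type*} [Monoid M] {x y : M} {n : ℕ}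
    (h : SemiconjBy y x (x ^ n)) (k : ℕ) : SemiconjBy (y ^ k) x (x ^ n ^ k) := by
  induction k with
  | zero => simp
  | succ k ih =>
    rw [pow_succ', pow_succ', pow_mul]
    exact (h.pow_right (n ^ k)).mul_left ih

theorem SemiconjBy.pow_pow_of_pow {M : Type*} [Monoid M] {x y : M} {n : ℕ}
    (h : SemiconjBy y x (x ^ n)) (k : ℕ) : SemiconjBy (y ^ k) (x ^ k) (x ^ (n ^ k * k)) := by
  rw [pow_mul]
  exact (h.pow_left_of_pow k).pow_right k

theorem not_commute_pow_pow_of_semiconjBy {M : Type*} [CancelMonoid M] {x y : M} {n k : ℕ}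
    (h : SemiconjBy y x (x ^ n)) (hx : ¬IsOfFinOrder x) (hn : n ≠ 1) (hk : k ≠ 0) :
    ¬Commute (x ^ k) (y ^ k) := by
  intro hcomm
  have hpow : x ^ (n ^ k * k) = x ^ k :=
    mul_right_cancel ((h.pow_pow_of_pow k).symm.trans hcomm.symm.eq)
  have : n ^ k * k = 1 * k := by simpa using injective_pow_iff_not_isOfFinOrder.mpr hx hpow
  simp [hn, hk] at this

open scoped commutatorElement in
theorem not_freelyGenerateF2_of_semiconjBy {G : Type*} [Group G] {x y z : G}
    (h : SemiconjBy y x z) (hz : Commute z x) : ¬FreelyGenerateF2 x y := by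
  intro hfree
  have hne : ⁅FreeGroup.of (1 : Fin 2) * FreeGroup.of 0 * (FreeGroup.of 1)⁻¹, FreeGroup.of 0⁆ ≠
      (1 : FreeGroup (Fin 2)) := by decide
  apply hne
  apply hfree
  simp [commutatorElement_eq_one_iff_commute, h.eq, hz]

namespace BaumslagSolitar

variable (n : ℕ)

abbrev a : BaumslagSolitar n := PresentedGroup.of 0

abbrev b : BaumslagSolitar n := PresentedGroup.of 1

theorem semiconjBy_b_a : SemiconjBy (b n) (a n) (a n ^ n) := by
  have h := PresentedGroup.one_of_mem (rels := bsRels n) rfl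
  simp only [map_mul, map_inv, map_pow, mul_inv_eq_one] at h
  exact mul_inv_eq_iff_eq_mul.mp h

def toAffinePerm (K : Type*) [DivisionRing K] (hn : (n : K) ≠ 0) :
    BaumslagSolitar n →* Equiv.Perm K :=
  PresentedGroup.toGroup
    (f := ![AddAction.toPerm (1 : K), MulAction.toPerm (Units.mk0 (n : K) hn)]) <| by
    rintro r rfl
    ext x
    simp [AddAction.toPerm_pow, Units.smul_def, mul_inv_cancel_left₀ hn]

theorem not_isOfFinOrder_a (hn : n ≠ 0) : ¬IsOfFinOrder (a n) := fun h =>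
  AddAction.not_isOfFinOrder_toPerm (one_ne_zero' ℚ) <| by
    simpa [toAffinePerm] using (toAffinePerm n ℚ (Nat.cast_ne_zero.mpr hn)).isOfFinOrder h

end BaumslagSolitar

/-- `BS(1,n)` does not satisfy the power alternative for `n ≥ 2`. -/
theorem baumslag_solitar_not_power_alternative (n : ℕ) (hn : 2 ≤ n) :
    ∃ g h : BaumslagSolitar n, ∀ k : ℕ, 1 ≤ k →
      ¬Commute (g ^ k) (h ^ k) ∧ ¬FreelyGenerateF2 (g ^ k) (h ^ k) := by
  have hrel := BaumslagSolitar.semiconjBy_b_a n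
  refine ⟨BaumslagSolitar.a n, BaumslagSolitar.b n, fun k hk => ⟨?_, ?_⟩⟩
  · exact not_commute_pow_pow_of_semiconjBy hrel
      (BaumslagSolitar.not_isOfFinOrder_a n (by omega)) (by omega) (by omega)
  · exact not_freelyGenerateF2_of_semiconjBy (hrel.pow_pow_of_pow k) (Commute.pow_pow_self _ _ _)
end

section
/- The group G = ⨁_{n ∈ ℕ} Equiv.Perm (Fin n) (the direct sum, i.e., restricted direct product, of the finite symmetric groups) satisfies the power alternative but does not satisfy the uniform power alternative: for all g, h ∈ G there exists n ≥ 1 such that gⁿ and hⁿ commute, yet for every N ≥ 1 there exist g, h ∈ G such that g^N and h^N neither commute nor freely generate a free subgroup of rank 2. -/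
/-- The restricted direct product (direct sum) of a family of groups: the subgroup of
the direct product consisting of the elements with all but finitely many coordinates
trivial. -/
def restrictedDirectProduct (ι : Type*) (M : ι → Type*) [∀ i, Group (M i)] :
    Subgroup (∀ i, M i) where
  carrier := {f | {i : ι | f i ≠ 1}.Finite}
  one_mem' := by
    have : {i : ι | (1 : ∀ i, M i) i ≠ 1} = ∅ := by
      ext i; simp
    show {i : ι | (1 : ∀ i, M i) i ≠ 1}.Finite
    rw [this]
    exact Set.finite_empty
  mul_mem' := by
    intro f g hf hg
    refine Set.Finite.subset (hf.union hg) ?_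
    intro i hi
    by_contra hmem
    simp only [Set.mem_union, Set.mem_setOf_eq, not_or, not_not] at hmem
    exact hi (by show f i * g i = 1; rw [hmem.1, hmem.2, one_mul])
  inv_mem' := by
    intro f hf
    refine Set.Finite.subset hf ?_
    intro i hi h1
    exact hi (by show (f i)⁻¹ = 1; rw [h1, inv_one])

/-!
Every element of `⨁ₙ Sym(n)` has finite support, hence finite order, so suitable powers of any
two elements are trivial, and since free groups are torsion-free no two elements generate one
freely.
For the failure of uniformity, an `m`-cycle with `m = 3N + 1` coprime to `N` is a power of its
own `N`-th power, so `N`-th powers of two non-commuting `m`-cycles still do not commute.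
-/

section Torsion

variable {G : Type*}

theorem exists_pow_commute_of_isOfFinOrder [Monoid G] {g h : G} (hg : IsOfFinOrder g)
    (hh : IsOfFinOrder h) : ∃ n, 1 ≤ n ∧ Commute (g ^ n) (h ^ n) := by
  refine ⟨orderOf g * orderOf h, Nat.mul_pos hg.orderOf_pos hh.orderOf_pos, ?_⟩
  rw [pow_mul, pow_orderOf_eq_one, one_pow, mul_comm, pow_mul, pow_orderOf_eq_one, one_pow]

theorem Commute.of_pow_of_coprime [Monoid G] {x y : G} {N : ℕ} (hx : N.Coprime (orderOf x))
    (hy : N.Coprime (orderOf y)) (h : Commute (x ^ N) (y ^ N)) : Commute x y := by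
  obtain ⟨a, hxa⟩ := exists_pow_eq_self_of_coprime hx
  obtain ⟨b, hyb⟩ := exists_pow_eq_self_of_coprime hy
  simpa only [hxa, hyb] using h.pow_pow a b

theorem not_freelyGenerateF2_of_isOfFinOrder [Group G] {x : G} (hx : IsOfFinOrder x) (y : G) :
    ¬FreelyGenerateF2 x y := by
  intro hinj
  have hof : IsOfFinOrder (FreeGroup.of (0 : Fin 2)) := by
    rw [← orderOf_pos_iff, ← orderOf_injective _ hinj, FreeGroup.lift_apply_of, if_pos rfl]
    exact hx.orderOf_pos
  exact FreeGroup.of_ne_one _ hof.eq_one'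

end Torsion

namespace restrictedDirectProduct

variable {ι : Type*} {M : ι → Type*} [∀ i, Group (M i)]

theorem isOfFinOrder (hM : ∀ i (x : M i), IsOfFinOrder x) (g : restrictedDirectProduct ι M) :
    IsOfFinOrder g := by
  have hS : {i | (g : ∀ i, M i) i ≠ 1}.Finite := g.2
  set n := ∏ i ∈ hS.toFinset, orderOf ((g : ∀ i, M i) i)
  refine isOfFinOrder_iff_pow_eq_one.2 ⟨n, Finset.prod_pos fun i _ => (hM i _).orderOf_pos, ?_⟩
  refine Subtype.ext <| funext fun i => ?_
  by_cases hi : (g : ∀ i, M i) i = 1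
  · simp [hi]
  · exact orderOf_dvd_iff_pow_eq_one.1 (Finset.dvd_prod_of_mem _ (by simpa using hi))

variable [DecidableEq ι]

def mulSingle (i : ι) : M i →* restrictedDirectProduct ι M :=
  (MonoidHom.mulSingle M i).codRestrict _ fun x =>
    (Set.finite_singleton i).subset fun j hj => by
      by_contra hji
      exact hj (Pi.mulSingle_eq_of_ne hji x)

theorem mulSingle_injective (i : ι) : Function.Injective (mulSingle (M := M) i) :=
  fun _ _ h => Pi.mulSingle_injective i (congrArg Subtype.val h)

theorem commute_mulSingle_iff {i : ι} {x y : M i} :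
    Commute (mulSingle i x) (mulSingle i y) ↔ Commute x y := by
  simp only [commute_iff_eq, ← map_mul, (mulSingle_injective i).eq_iff]

end restrictedDirectProduct

theorem Equiv.Perm.exists_orderOf_eq_and_not_commute {m : ℕ} (hm : 4 ≤ m) :
    ∃ x y : Equiv.Perm (Fin m), orderOf x = m ∧ orderOf y = m ∧ ¬Commute x y := by
  obtain ⟨n, rfl⟩ : ∃ n, m = n + 4 := ⟨m - 4, by omega⟩
  have hord : orderOf (finRotate (n + 4)) = n + 4 := by
    rw [← lcm_cycleType, cycleType_finRotate_of_le (by omega), Multiset.lcm_singleton,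
      normalize_eq]
  refine ⟨finRotate (n + 4), MulAut.conj (swap 0 1) (finRotate (n + 4)), hord,
    by rw [MulEquiv.orderOf_eq, hord], fun h => ?_⟩
  -- evaluated at `0`, the two products are `3` and `0`
  have h0 := congrArg Fin.val (DFunLike.congr_fun h.eq 0)
  have h2 : 2 % (n + 4) = 2 := Nat.mod_eq_of_lt (by omega)
  have h3 : 3 % (n + 4) = 3 := Nat.mod_eq_of_lt (by omega)
  simp [MulAut.conj_apply, swap_apply_def, Fin.ext_iff, Fin.val_add, h2, h3] at h0

/-- the direct sum of all finite symmetric groups satisfies the power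
alternative (powers always commute) but not the uniform power alternative. -/
theorem directSum_perm_power_alternative_not_uniform :
    (∀ g h : restrictedDirectProduct ℕ (fun n => Equiv.Perm (Fin n)),
      ∃ n : ℕ, 1 ≤ n ∧ Commute (g ^ n) (h ^ n)) ∧
    (∀ N : ℕ, 1 ≤ N →
      ∃ g h : restrictedDirectProduct ℕ (fun n => Equiv.Perm (Fin n)),
        ¬Commute (g ^ N) (h ^ N) ∧ ¬FreelyGenerateF2 (g ^ N) (h ^ N)) := by
  have torsion := restrictedDirectProduct.isOfFinOrder (M := fun n => Equiv.Perm (Fin n))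
    fun _ => isOfFinOrder_of_finite
  refine ⟨fun g h => exists_pow_commute_of_isOfFinOrder (torsion g) (torsion h), fun N hN => ?_⟩
  obtain ⟨x, y, hx, hy, hxy⟩ :=
    Equiv.Perm.exists_orderOf_eq_and_not_commute (m := 3 * N + 1) (by omega)
  have hcop : N.Coprime (3 * N + 1) := by simp
  refine ⟨restrictedDirectProduct.mulSingle _ x, restrictedDirectProduct.mulSingle _ y, ?_,
    not_freelyGenerateF2_of_isOfFinOrder (torsion _).pow _⟩
  rw [← map_pow, ← map_pow, restrictedDirectProduct.commute_mulSingle_iff]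
  exact fun h => hxy (h.of_pow_of_coprime (by rwa [hx]) (by rwa [hy]))
end
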